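/- arXiv:2508.05854 — 10 statements merged into one kernel-verified Lean document; each statement's English description precedes it below -/
import Mathlib

section
/- Let m, n, N be positive integers, P an N×n complex matrix, and Π an N×N complex matrix which is the orthogonal projection onto the column space of P (Π Hermitian, Π·Π = Π, range Π = range P). Then for every Hermitian matrix ρ indexed by (Fin m) × (Fin N), the following are equivalent: (i) ρ is PSD and ρ = (I_m ⊗ Π)·ρ·(I_m ⊗ Π); (ii) there exists a PSD matrix X indexed by (Fin m) × (Fin n) with ρ = (I_m ⊗ P)·X·(I_m ⊗ P)†. -/
open Matrix
open scoped Kronecker ComplexOrder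

/-
Write `A = I_m ⊗ P` and `K = I_m ⊗ Π`. Since the columns of `P` lie in the range of the
projection `Π` and the columns of `Π` in the range of `P`, we have `Π P = P` and `Π = P R`
for some `R`; hence `K A = A` and `K = A B` with `B = I_m ⊗ R`. Then `A X Aᴴ` is fixed by
`ρ ↦ K ρ K`, and conversely a PSD `ρ = K ρ K` equals `A (B ρ Bᴴ) Aᴴ`, where `B ρ Bᴴ` is
again PSD.
-/

namespace Matrix

variable {R : Type*} {l m n : Type*}

theorem exists_mul_eq_of_range_mulVecLin_le [CommSemiring R] [Fintype m] [Fintype n]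
    [DecidableEq n] {A : Matrix l n R} {B : Matrix l m R}
    (h : LinearMap.range A.mulVecLin ≤ LinearMap.range B.mulVecLin) :
    ∃ C : Matrix m n R, B * C = A := by
  have hcol : ∀ j, ∃ w, B *ᵥ w = A.col j := fun j =>
    h ⟨Pi.single j 1, mulVec_single_one A j⟩
  choose w hw using hcol
  refine ⟨(of w)ᵀ, ext_of_mulVec_single fun j => ?_⟩
  rw [← mulVec_mulVec, mulVec_single_one, mulVec_single_one, col_transpose]
  exact hw j

theorem mul_eq_self_of_range_mulVecLin_le [CommSemiring R] [Fintype l] [Fintype n]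
    [DecidableEq n] {Q : Matrix l l R} (hQ : IsIdempotentElem Q) {P : Matrix l n R}
    (h : LinearMap.range P.mulVecLin ≤ LinearMap.range Q.mulVecLin) :
    Q * P = P := by
  obtain ⟨C, rfl⟩ := exists_mul_eq_of_range_mulVecLin_le h
  rw [← Matrix.mul_assoc, hQ.eq]

theorem posSemidef_and_eq_mul_mul_iff_exists [Ring R] [PartialOrder R] [StarRing R]
    [Fintype m] [Fintype n] {A : Matrix m n R} {B : Matrix n m R} {K : Matrix m m R}
    (hK : Kᴴ = K) (hKA : K * A = A) (hAB : A * B = K) (ρ : Matrix m m R) :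
    (ρ.PosSemidef ∧ ρ = K * ρ * K) ↔
      ∃ X : Matrix n n R, X.PosSemidef ∧ ρ = A * X * Aᴴ := by
  have hAK : Aᴴ * K = Aᴴ := by rw [← hK, ← conjTranspose_mul, hKA]
  constructor
  · rintro ⟨hρ, hfix⟩
    refine ⟨B * ρ * Bᴴ, hρ.mul_mul_conjTranspose_same B, ?_⟩
    calc ρ = K * ρ * K := hfix
      _ = (A * B) * ρ * (A * B)ᴴ := by rw [hAB, hK]
      _ = A * (B * ρ * Bᴴ) * Aᴴ := by simp only [conjTranspose_mul, Matrix.mul_assoc]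
  · rintro ⟨X, hX, rfl⟩
    refine ⟨hX.mul_mul_conjTranspose_same A, ?_⟩
    calc A * X * Aᴴ = (K * A) * X * (Aᴴ * K) := by rw [hKA, hAK]
      _ = K * (A * X * Aᴴ) * K := by simp only [Matrix.mul_assoc]

theorem one_kronecker_mul_one_kronecker [CommSemiring R] [Fintype l] [Fintype n]
    [DecidableEq l] {k : Type*} (M : Matrix m n R) (M' : Matrix n k R) :
    ((1 : Matrix l l R) ⊗ₖ M) * ((1 : Matrix l l R) ⊗ₖ M') =
      (1 : Matrix l l R) ⊗ₖ (M * M') := by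
  rw [← mul_kronecker_mul, Matrix.one_mul]

end Matrix

theorem stmt1_general (m n N : ℕ)
    (P : Matrix (Fin N) (Fin n) ℂ)
    (Q : Matrix (Fin N) (Fin N) ℂ)
    (hQH : Q.IsHermitian) (hQidem : Q * Q = Q)
    (hQrange : LinearMap.range Q.mulVecLin = LinearMap.range P.mulVecLin)
    (ρ : Matrix (Fin m × Fin N) (Fin m × Fin N) ℂ) :
    (ρ.PosSemidef ∧
        ρ = ((1 : Matrix (Fin m) (Fin m) ℂ) ⊗ₖ Q) * ρ * ((1 : Matrix (Fin m) (Fin m) ℂ) ⊗ₖ Q))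
      ↔ ∃ X : Matrix (Fin m × Fin n) (Fin m × Fin n) ℂ,
          X.PosSemidef ∧
            ρ = ((1 : Matrix (Fin m) (Fin m) ℂ) ⊗ₖ P) * X * ((1 : Matrix (Fin m) (Fin m) ℂ) ⊗ₖ P)ᴴ := by
  have hQP : Q * P = P := mul_eq_self_of_range_mulVecLin_le hQidem hQrange.ge
  obtain ⟨R, hPR⟩ := exists_mul_eq_of_range_mulVecLin_le hQrange.le
  refine posSemidef_and_eq_mul_mul_iff_exists
    (B := (1 : Matrix (Fin m) (Fin m) ℂ) ⊗ₖ R) ?_ ?_ ?_ ρ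
  · rw [conjTranspose_kronecker, conjTranspose_one, hQH.eq]
  · rw [one_kronecker_mul_one_kronecker, hQP]
  · rw [one_kronecker_mul_one_kronecker, hPR]

theorem stmt1 (m n N : ℕ) (hm : 0 < m) (hn : 0 < n) (hN : 0 < N)
    (P : Matrix (Fin N) (Fin n) ℂ)
    (Q : Matrix (Fin N) (Fin N) ℂ)
    (hQH : Q.IsHermitian) (hQidem : Q * Q = Q)
    (hQrange : LinearMap.range Q.mulVecLin = LinearMap.range P.mulVecLin)
    (ρ : Matrix (Fin m × Fin N) (Fin m × Fin N) ℂ) (hρ : ρ.IsHermitian) :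
    (ρ.PosSemidef ∧
        ρ = ((1 : Matrix (Fin m) (Fin m) ℂ) ⊗ₖ Q) * ρ * ((1 : Matrix (Fin m) (Fin m) ℂ) ⊗ₖ Q))
      ↔ ∃ X : Matrix (Fin m × Fin n) (Fin m × Fin n) ℂ,
          X.PosSemidef ∧
            ρ = ((1 : Matrix (Fin m) (Fin m) ℂ) ⊗ₖ P) * X * ((1 : Matrix (Fin m) (Fin m) ℂ) ⊗ₖ P)ᴴ :=
  stmt1_general m n N P Q hQH hQidem hQrange ρ
end

section
/- Let ι be a finite type and suppose P is a complex matrix with rows indexed by I_k and columns indexed by ι whose column space equals Sym_k. Then the following two sets of matrices indexed by (Fin d_a) × (Fin d) are equal: { PTr_k(ρ) : ρ is a PSD matrix indexed by (Fin d_a) × I_k with ρ = (I ⊗ Π_k)·ρ·(I ⊗ Π_k) } and { PTr_k((I ⊗ P)·X·(I ⊗ P)†) : X is a PSD matrix indexed by (Fin d_a) × ι }. -/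
open Matrix
open scoped Kronecker ComplexOrder

noncomputable section

/-- The subspace of symmetric vectors: `ψ (i ∘ π) = ψ i` for every permutation `π`. -/
def SymSpace (d k : ℕ) : Submodule ℂ ((Fin k → Fin d) → ℂ) where
  carrier := {ψ | ∀ (i : Fin k → Fin d) (π : Equiv.Perm (Fin k)), ψ (i ∘ π) = ψ i}
  add_mem' := by
    intro ψ φ hψ hφ i π
    simp [hψ i π, hφ i π]
  zero_mem' := by intro i π; rfl
  smul_mem' := by
    intro c ψ hψ i π
    simp [hψ i π]

/-- `cons0 b r` is the sequence `b⌢r` sending `0` to `b` and `s+1` to `r s`. -/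
def cons0 {d k : ℕ} (b : Fin d) (r : Fin (k - 1) → Fin d) : Fin k → Fin d :=
  fun s => if h : (s : ℕ) = 0 then b else r ⟨(s : ℕ) - 1, by have := s.isLt; omega⟩

/-- Partial trace over the last `k - 1` factors. -/
def PTr (da d k : ℕ)
    (M : Matrix (Fin da × (Fin k → Fin d)) (Fin da × (Fin k → Fin d)) ℂ) :
    Matrix (Fin da × Fin d) (Fin da × Fin d) ℂ :=
  fun p q => ∑ r : Fin (k - 1) → Fin d, M (p.1, cons0 p.2 r) (q.1, cons0 q.2 r)

end

namespace Matrix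

section Range

variable {R : Type*} [CommSemiring R] {m n : Type*} [Fintype m] [Fintype n]

theorem mul_eq_of_isIdempotentElem_of_range_le {Q : Matrix m m R} {P : Matrix m n R}
    (hQ : IsIdempotentElem Q) (h : LinearMap.range P.mulVecLin ≤ LinearMap.range Q.mulVecLin) :
    Q * P = P := by
  classical
  refine ext_of_mulVec_single fun j => ?_
  obtain ⟨v, hv⟩ := h (LinearMap.mem_range_self P.mulVecLin (Pi.single j 1))
  simp only [mulVecLin_apply] at hv
  rw [← mulVec_mulVec, ← hv, mulVec_mulVec, hQ.eq]

theorem exists_mul_eq_of_range_le [DecidableEq m] {Q : Matrix m m R} {P : Matrix m n R}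
    (h : LinearMap.range Q.mulVecLin ≤ LinearMap.range P.mulVecLin) :
    ∃ B : Matrix n m R, P * B = Q := by
  choose v hv using fun j => h (LinearMap.mem_range_self Q.mulVecLin (Pi.single j 1))
  refine ⟨(of v)ᵀ, ext_of_mulVec_single fun j => ?_⟩
  rw [← mulVec_mulVec, mulVec_single_one, col_transpose]
  exact hv j

end Range

variable {R : Type*} [Ring R] [PartialOrder R] [StarRing R] {n ι : Type*} [Fintype n] [Fintype ι]

/-- `Q * P = P` and `P * B = Q` say that `Q` is a projection with the column space of `P`. -/
theorem setOf_posSemidef_compress_eq_image_conj {Q : Matrix n n R} {P : Matrix n ι R}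
    {B : Matrix ι n R} (hQ : Q.IsHermitian) (hQP : Q * P = P) (hPB : P * B = Q) :
    {ρ : Matrix n n R | ρ.PosSemidef ∧ ρ = Q * ρ * Q} =
      (fun X : Matrix ι ι R => P * X * Pᴴ) '' {X | X.PosSemidef} := by
  ext ρ
  constructor
  · rintro ⟨hρ, hρQ⟩
    refine ⟨B * ρ * Bᴴ, hρ.mul_mul_conjTranspose_same B, ?_⟩
    calc P * (B * ρ * Bᴴ) * Pᴴ = (P * B) * ρ * (P * B)ᴴ := by
          simp only [conjTranspose_mul, Matrix.mul_assoc]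
      _ = ρ := by rw [hPB, hQ.eq, ← hρQ]
  · rintro ⟨X, hX, rfl⟩
    refine ⟨hX.mul_mul_conjTranspose_same P, ?_⟩
    calc P * X * Pᴴ = (Q * P) * X * (Q * P)ᴴ := by rw [hQP]
      _ = Q * (P * X * Pᴴ) * Q := by simp only [conjTranspose_mul, hQ.eq, Matrix.mul_assoc]

end Matrix

theorem stmt2_general (da d k : ℕ)
    (ι : Type) [Fintype ι]
    (P : Matrix (Fin k → Fin d) ι ℂ)
    (hP : LinearMap.range P.mulVecLin = SymSpace d k)
    (Q : Matrix (Fin k → Fin d) (Fin k → Fin d) ℂ)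
    (hQH : Q.IsHermitian) (hQidem : Q * Q = Q)
    (hQrange : LinearMap.range Q.mulVecLin = SymSpace d k) :
    {σ : Matrix (Fin da × Fin d) (Fin da × Fin d) ℂ |
        ∃ ρ : Matrix (Fin da × (Fin k → Fin d)) (Fin da × (Fin k → Fin d)) ℂ,
          ρ.PosSemidef ∧
          ρ = ((1 : Matrix (Fin da) (Fin da) ℂ) ⊗ₖ Q) * ρ * ((1 : Matrix (Fin da) (Fin da) ℂ) ⊗ₖ Q) ∧
          σ = PTr da d k ρ} =
    {σ : Matrix (Fin da × Fin d) (Fin da × Fin d) ℂ |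
        ∃ X : Matrix (Fin da × ι) (Fin da × ι) ℂ,
          X.PosSemidef ∧
          σ = PTr da d k (((1 : Matrix (Fin da) (Fin da) ℂ) ⊗ₖ P) * X *
            ((1 : Matrix (Fin da) (Fin da) ℂ) ⊗ₖ P)ᴴ)} := by
  obtain ⟨B, hPB⟩ := exists_mul_eq_of_range_le (hQrange.trans hP.symm).le
  have hQP : Q * P = P := mul_eq_of_isIdempotentElem_of_range_le hQidem (hP.trans hQrange.symm).le
  have hcompress := setOf_posSemidef_compress_eq_image_conj
    (P := (1 : Matrix (Fin da) (Fin da) ℂ) ⊗ₖ P) (B := 1 ⊗ₖ B)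
    (by rw [IsHermitian, conjTranspose_kronecker, conjTranspose_one, hQH.eq])
    (by rw [← mul_kronecker_mul, one_mul, hQP]) (by rw [← mul_kronecker_mul, one_mul, hPB])
  ext σ
  constructor
  · rintro ⟨ρ, hρ, hρQ, rfl⟩
    obtain ⟨X, hX, rfl⟩ := hcompress.subset ⟨hρ, hρQ⟩
    exact ⟨X, hX, rfl⟩
  · rintro ⟨X, hX, rfl⟩
    obtain ⟨hρ, hρQ⟩ := hcompress.superset ⟨X, hX, rfl⟩
    exact ⟨_, hρ, hρQ, rfl⟩

theorem stmt2 (da d k : ℕ) (hda : 0 < da) (hd : 0 < d) (hk : 0 < k)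
    (ι : Type) [Fintype ι] [DecidableEq ι]
    (P : Matrix (Fin k → Fin d) ι ℂ)
    (hP : LinearMap.range P.mulVecLin = SymSpace d k)
    (Q : Matrix (Fin k → Fin d) (Fin k → Fin d) ℂ)
    (hQH : Q.IsHermitian) (hQidem : Q * Q = Q)
    (hQrange : LinearMap.range Q.mulVecLin = SymSpace d k) :
    {σ : Matrix (Fin da × Fin d) (Fin da × Fin d) ℂ |
        ∃ ρ : Matrix (Fin da × (Fin k → Fin d)) (Fin da × (Fin k → Fin d)) ℂ,
          ρ.PosSemidef ∧
          ρ = ((1 : Matrix (Fin da) (Fin da) ℂ) ⊗ₖ Q) * ρ * ((1 : Matrix (Fin da) (Fin da) ℂ) ⊗ₖ Q) ∧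
          σ = PTr da d k ρ} =
    {σ : Matrix (Fin da × Fin d) (Fin da × Fin d) ℂ |
        ∃ X : Matrix (Fin da × ι) (Fin da × ι) ℂ,
          X.PosSemidef ∧
          σ = PTr da d k (((1 : Matrix (Fin da) (Fin da) ℂ) ⊗ₖ P) * X *
            ((1 : Matrix (Fin da) (Fin da) ℂ) ⊗ₖ P)ᴴ)} :=
  stmt2_general da d k ι P hP Q hQH hQidem hQrange
end

section
/- Define the B-partial transpose of a matrix M indexed by (Fin d_a) × I_k by T_B(M)((a,i),(a',i')) := M((a,i'),(a',i)). Then for every Hermitian matrix X indexed by (Fin d_a) × J_k, the matrix T_B((I ⊗ P)·X·(I ⊗ P)†) is PSD if and only if T(X) is PSD. -/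
open Matrix
open scoped Kronecker ComplexOrder

noncomputable section

instance monoDecidable {k d : ℕ} : DecidablePred (Monotone : (Fin k → Fin d) → Prop) :=
  fun f => decidable_of_iff (∀ a b : Fin k, a ≤ b → f a ≤ f b) Iff.rfl

/-- `Jk d k` : nondecreasing sequences of length `k` from `{0, …, d-1}`. -/
abbrev Jk (d k : ℕ) := {f : Fin k → Fin d // Monotone f}

/-- the nondecreasing rearrangement of a sequence. -/
def sortTuple {d k : ℕ} (i : Fin k → Fin d) : Jk d k :=
  ⟨i ∘ Tuple.sort i, Tuple.monotone_sort i⟩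

/-- `permCount j` : the number of sequences whose sorted rearrangement is `j`. -/
def permCount {d k : ℕ} (j : Jk d k) : ℕ :=
  (Finset.univ.filter fun i : Fin k → Fin d => sortTuple i = j).card

/-- The scaled partition matrix `P`. -/
def Pmat (d k : ℕ) : Matrix (Fin k → Fin d) (Jk d k) ℂ :=
  fun i j => if sortTuple i = j then (((permCount j : ℝ) ^ (-(1/2) : ℝ) : ℝ) : ℂ) else 0

/-- The operator `A`. -/
def Amap (da d k : ℕ) (X : Matrix (Fin da × Jk d k) (Fin da × Jk d k) ℂ) :
    Matrix (Fin da × Fin d) (Fin da × Fin d) ℂ :=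
  PTr da d k (((1 : Matrix (Fin da) (Fin da) ℂ) ⊗ₖ Pmat d k) * X *
    ((1 : Matrix (Fin da) (Fin da) ℂ) ⊗ₖ Pmat d k)ᴴ)

/-- The extension operator `E` : `E(W) ((a,i),(a',i')) = W ((a, i 0), (a', i' 0))` when
`i` and `i'` agree on all later coordinates, and `0` otherwise. -/
def Emat (da d k : ℕ) (hk : 0 < k)
    (W : Matrix (Fin da × Fin d) (Fin da × Fin d) ℂ) :
    Matrix (Fin da × (Fin k → Fin d)) (Fin da × (Fin k → Fin d)) ℂ :=
  fun p q =>
    if ∀ s : Fin (k - 1),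
        p.2 ⟨(s : ℕ) + 1, by have := s.isLt; omega⟩ =
          q.2 ⟨(s : ℕ) + 1, by have := s.isLt; omega⟩
    then W (p.1, p.2 ⟨0, hk⟩) (q.1, q.2 ⟨0, hk⟩) else 0

/-- The adjoint operator `A†`. -/
def Adag (da d k : ℕ) (hk : 0 < k)
    (W : Matrix (Fin da × Fin d) (Fin da × Fin d) ℂ) :
    Matrix (Fin da × Jk d k) (Fin da × Jk d k) ℂ :=
  ((1 : Matrix (Fin da) (Fin da) ℂ) ⊗ₖ Pmat d k)ᴴ * Emat da d k hk W *
    ((1 : Matrix (Fin da) (Fin da) ℂ) ⊗ₖ Pmat d k)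

/-- Partial transpose in the second index. -/
def pTransp {m α : Type*} (M : Matrix (m × α) (m × α) ℂ) : Matrix (m × α) (m × α) ℂ :=
  fun p q => M (p.1, q.2) (q.1, p.2)

/-- Squared Frobenius norm. -/
def frobSq {α β : Type*} [Fintype α] [Fintype β] (M : Matrix α β ℂ) : ℝ :=
  ∑ p, ∑ q, ‖M p q‖ ^ 2

/-- Largest eigenvalue of a Hermitian matrix. -/
def lamMax {n : Type*} [Fintype n] [DecidableEq n]
    {M : Matrix n n ℂ} (hM : M.IsHermitian) : ℝ :=
  ⨆ i, hM.eigenvalues i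

end


/-! Since `P` has real entries, the partial transpose commutes with the congruence
`X ↦ (I ⊗ P) X (I ⊗ P)†`; since `P` is an isometry, that congruence both preserves and
reflects positive semidefiniteness. -/

theorem sortTuple_val {d k : ℕ} (j : Jk d k) : sortTuple j.val = j :=
  Subtype.ext <| by
    simp [sortTuple, Tuple.sort_eq_refl_iff_monotone.mpr j.2]

theorem permCount_pos {d k : ℕ} (j : Jk d k) : 0 < permCount j :=
  Finset.card_pos.mpr ⟨j.val, by simp [sortTuple_val]⟩

theorem star_Pmat_apply {d k : ℕ} (i : Fin k → Fin d) (j : Jk d k) :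
    star (Pmat d k i j) = Pmat d k i j := by
  unfold Pmat
  split_ifs <;> simp

theorem Pmat_map_star (d k : ℕ) : (Pmat d k).map star = Pmat d k :=
  Matrix.ext star_Pmat_apply

theorem Pmat_conjTranspose_mul_self (d k : ℕ) : (Pmat d k)ᴴ * Pmat d k = 1 := by
  ext j j'
  simp only [mul_apply, conjTranspose_apply, star_Pmat_apply]
  unfold Pmat
  simp only [ite_zero_mul_ite_zero]
  by_cases h : j = j'
  · subst h
    have hc : (0 : ℝ) < permCount j := by exact_mod_cast permCount_pos j
    simp only [and_self, Finset.sum_ite, Finset.sum_const_zero, add_zero, Finset.sum_const,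
      nsmul_eq_mul, one_apply_eq]
    rw [← permCount, ← Complex.ofReal_mul, ← Real.rpow_add hc, ← Complex.ofReal_natCast,
      ← Complex.ofReal_mul]
    norm_num [Real.rpow_neg_one, hc.ne']
  · rw [one_apply_ne h]
    exact Finset.sum_eq_zero fun i _ => if_neg fun hi => h (hi.1.symm.trans hi.2)

theorem pTransp_kronecker_mul_mul_conjTranspose {m α β : Type*} [Fintype m] [Fintype β]
    (A B : Matrix m m ℂ) (R S : Matrix α β ℂ) (X : Matrix (m × β) (m × β) ℂ) :
    pTransp ((A ⊗ₖ R) * X * (B ⊗ₖ S)ᴴ) =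
      (A ⊗ₖ S.map star) * pTransp X * (B ⊗ₖ R.map star)ᴴ := by
  ext ⟨a, i⟩ ⟨a', i'⟩
  simp only [pTransp, mul_apply, conjTranspose_apply, kroneckerMap_apply, map_apply,
    Fintype.sum_prod_type, Finset.sum_mul, star_mul', star_star]
  refine Finset.sum_congr rfl fun b' _ => ?_
  rw [Finset.sum_comm]
  conv_rhs => rw [Finset.sum_comm]
  refine Finset.sum_congr rfl fun b _ => ?_
  rw [Finset.sum_comm]
  refine Finset.sum_congr rfl fun j _ => Finset.sum_congr rfl fun j' _ => ?_
  ring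

theorem posSemidef_mul_mul_conjTranspose_iff {m n R : Type*} [Fintype m] [Fintype n]
    [DecidableEq n] [CommRing R] [PartialOrder R] [StarRing R] [StarOrderedRing R]
    {Q : Matrix m n R} (hQ : Qᴴ * Q = 1) {A : Matrix n n R} :
    (Q * A * Qᴴ).PosSemidef ↔ A.PosSemidef := by
  refine ⟨fun h => ?_, fun h => h.mul_mul_conjTranspose_same Q⟩
  simpa [Matrix.mul_assoc, ← Matrix.mul_assoc Qᴴ, hQ] using h.conjTranspose_mul_mul_same Q

theorem stmt3_general (da d k : ℕ) :
    ∀ X : Matrix (Fin da × Jk d k) (Fin da × Jk d k) ℂ, X.IsHermitian →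
      ((pTransp (((1 : Matrix (Fin da) (Fin da) ℂ) ⊗ₖ Pmat d k) * X *
          ((1 : Matrix (Fin da) (Fin da) ℂ) ⊗ₖ Pmat d k)ᴴ)).PosSemidef ↔
        (pTransp X).PosSemidef) := by
  intro X _
  have hQ : ((1 : Matrix (Fin da) (Fin da) ℂ) ⊗ₖ Pmat d k)ᴴ *
      ((1 : Matrix (Fin da) (Fin da) ℂ) ⊗ₖ Pmat d k) = 1 := by
    rw [conjTranspose_kronecker, ← mul_kronecker_mul, conjTranspose_one, Matrix.one_mul,
      Pmat_conjTranspose_mul_self, one_kronecker_one]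
  rw [pTransp_kronecker_mul_mul_conjTranspose, Pmat_map_star]
  exact posSemidef_mul_mul_conjTranspose_iff hQ

theorem stmt3 (da d k : ℕ) (hda : 0 < da) (hd : 0 < d) (hk : 0 < k) :
    ∀ X : Matrix (Fin da × Jk d k) (Fin da × Jk d k) ℂ, X.IsHermitian →
      ((pTransp (((1 : Matrix (Fin da) (Fin da) ℂ) ⊗ₖ Pmat d k) * X *
          ((1 : Matrix (Fin da) (Fin da) ℂ) ⊗ₖ Pmat d k)ᴴ)).PosSemidef ↔
        (pTransp X).PosSemidef) :=
  stmt3_general da d k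
end

section
/- For every finite index set F, nonnegative reals w_i (i ∈ F), vectors x_i ∈ ℂ^{d_a} and y_i ∈ ℂ^{d}, there exists a PSD matrix ρ' indexed by (Fin d_a) × I_k such that ρ' = (I ⊗ Π_k)·ρ'·(I ⊗ Π_k) and PTr_k(ρ') = ∑_{i ∈ F} w_i · (x_i x_i†) ⊗ (y_i y_i†). (That is, every separable operator admits a symmetric extension of every order k, so SEP ⊆ EXT_k.) -/
/-!
Take `ρ' = ∑ᵢ cᵢ (xᵢ xᵢ†) ⊗ (Yᵢ Yᵢ†)` with `Yᵢ = yᵢ^{⊗k}`. Each `Yᵢ` is a symmetric vector, hence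
fixed by the projection `Q`, so `ρ'` is invariant under `1 ⊗ Q`. Tracing out the last `k - 1`
factors of `Yᵢ Yᵢ†` leaves `‖yᵢ‖^{2(k-1)} yᵢ yᵢ†`, which the weight `cᵢ = wᵢ / ‖yᵢ‖^{2(k-1)}`
cancels (when `yᵢ = 0` both sides vanish).
-/

open Matrix
open scoped Kronecker ComplexOrder

def tensorPow {ι R : Type*} [CommMonoid R] (k : ℕ) (y : ι → R) : (Fin k → ι) → R :=
  fun s => ∏ t, y (s t)

def traceTail {d k : ℕ} (B : Matrix (Fin k → Fin d) (Fin k → Fin d) ℂ) :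
    Matrix (Fin d) (Fin d) ℂ :=
  fun b b' => ∑ r : Fin (k - 1) → Fin d, B (cons0 b r) (cons0 b' r)

theorem tensorPow_mem_symSpace {d : ℕ} (k : ℕ) (y : Fin d → ℂ) :
    tensorPow k y ∈ SymSpace d k :=
  fun s π => Equiv.prod_comp π fun t => y (s t)

theorem tensorPow_cons0 {d : ℕ} {R : Type*} [CommMonoid R] {k : ℕ} (hk : 0 < k) (y : Fin d → R)
    (b : Fin d) (r : Fin (k - 1) → Fin d) :
    tensorPow k y (cons0 b r) = y b * tensorPow (k - 1) y r := by
  obtain ⟨m, rfl⟩ : ∃ m, k = m + 1 := ⟨k - 1, by omega⟩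
  simp [tensorPow, cons0, Fin.prod_univ_succ]

theorem Matrix.mulVec_eq_self_of_mem_range {n R : Type*} [Fintype n] [CommSemiring R] {Q : Matrix n n R} (hQ : Q * Q = Q) {v : n → R}
    (hv : v ∈ LinearMap.range Q.mulVecLin) : Q *ᵥ v = v := by
  obtain ⟨u, rfl⟩ := hv
  simp only [mulVecLin_apply, mulVec_mulVec, hQ]

theorem Matrix.IsHermitian.mul_vecMulVec_star_mul {n R : Type*} [Fintype n] [CommRing R]
    [StarRing R] {Q : Matrix n n R} (hQ : Q.IsHermitian) {v : n → R} (hv : Q *ᵥ v = v) :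
    Q * vecMulVec v (star v) * Q = vecMulVec v (star v) := by
  have hv' : star v ᵥ* Q = star v := by
    have := congrArg star hv
    rwa [star_mulVec, hQ.eq] at this
  rw [mul_vecMulVec, vecMulVec_mul, hv, hv']

theorem PTr_sum {da d k : ℕ} {ι : Type*} (s : Finset ι)
    (M : ι → Matrix (Fin da × (Fin k → Fin d)) (Fin da × (Fin k → Fin d)) ℂ) :
    PTr da d k (∑ i ∈ s, M i) = ∑ i ∈ s, PTr da d k (M i) := by
  ext p q
  simp only [PTr, Matrix.sum_apply]
  exact Finset.sum_comm

theorem PTr_smul {da d k : ℕ} (c : ℂ)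
    (M : Matrix (Fin da × (Fin k → Fin d)) (Fin da × (Fin k → Fin d)) ℂ) :
    PTr da d k (c • M) = c • PTr da d k M := by
  ext p q
  simp [PTr, Finset.mul_sum]

theorem PTr_kronecker {da d k : ℕ} (A : Matrix (Fin da) (Fin da) ℂ)
    (B : Matrix (Fin k → Fin d) (Fin k → Fin d) ℂ) :
    PTr da d k (A ⊗ₖ B) = A ⊗ₖ traceTail B := by
  ext p q
  simp [PTr, traceTail, Finset.mul_sum]

theorem traceTail_vecMulVec_tensorPow {d k : ℕ} (hk : 0 < k) (y : Fin d → ℂ) :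
    traceTail (vecMulVec (tensorPow k y) (star (tensorPow k y))) =
      ((∑ j, Complex.normSq (y j) : ℝ) : ℂ) ^ (k - 1) • vecMulVec y (star y) := by
  have hnorm : ((∑ j, Complex.normSq (y j) : ℝ) : ℂ) = ∑ j, y j * star (y j) := by
    push_cast
    exact Finset.sum_congr rfl fun j _ => (Complex.mul_conj (y j)).symm
  ext b b'
  simp only [traceTail, vecMulVec_apply, Pi.star_apply, tensorPow_cons0 hk, Matrix.smul_apply,
    smul_eq_mul, hnorm, Fintype.sum_pow, Finset.sum_mul]
  refine Finset.sum_congr rfl fun r _ => ?_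
  simp only [tensorPow, star_mul', star_prod, Finset.prod_mul_distrib]
  ring

theorem ofReal_div_pow_smul_vecMulVec {d : ℕ} (w : ℝ) (m : ℕ) (y : Fin d → ℂ) :
    (((w / (∑ j, Complex.normSq (y j)) ^ m : ℝ) : ℂ) •
        ((∑ j, Complex.normSq (y j) : ℝ) : ℂ) ^ m • vecMulVec y (star y)) =
      (w : ℂ) • vecMulVec y (star y) := by
  rcases eq_or_ne y 0 with rfl | hy
  · simp
  have hpos : 0 < ∑ j, Complex.normSq (y j) := by
    obtain ⟨j, hj⟩ := Function.ne_iff.mp hy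
    exact Finset.sum_pos' (fun j _ => Complex.normSq_nonneg _)
      ⟨j, Finset.mem_univ _, Complex.normSq_pos.mpr hj⟩
  rw [smul_smul, ← Complex.ofReal_pow, ← Complex.ofReal_mul, div_mul_cancel₀ _ (by positivity)]

theorem stmt4_general (da d k : ℕ) (hk : 0 < k)
    (Q : Matrix (Fin k → Fin d) (Fin k → Fin d) ℂ)
    (hQH : Q.IsHermitian) (hQidem : Q * Q = Q)
    (hQrange : LinearMap.range Q.mulVecLin = SymSpace d k)
    (F : Type) [Fintype F] (w : F → ℝ) (hw : ∀ i, 0 ≤ w i)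
    (x : F → Fin da → ℂ) (y : F → Fin d → ℂ) :
    ∃ ρ' : Matrix (Fin da × (Fin k → Fin d)) (Fin da × (Fin k → Fin d)) ℂ,
      ρ'.PosSemidef ∧
      ρ' = ((1 : Matrix (Fin da) (Fin da) ℂ) ⊗ₖ Q) * ρ' * ((1 : Matrix (Fin da) (Fin da) ℂ) ⊗ₖ Q) ∧
      PTr da d k ρ' = ∑ i : F, ((w i : ℝ) : ℂ) •
        (Matrix.vecMulVec (x i) (star (x i)) ⊗ₖ Matrix.vecMulVec (y i) (star (y i))) := by
  set c : F → ℝ := fun i => w i / (∑ j, Complex.normSq (y i j)) ^ (k - 1)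
  set Y : F → (Fin k → Fin d) → ℂ := fun i => tensorPow k (y i)
  refine ⟨∑ i, (c i : ℂ) • (vecMulVec (x i) (star (x i)) ⊗ₖ vecMulVec (Y i) (star (Y i))),
    ?_, ?_, ?_⟩
  · refine posSemidef_sum _ fun i _ => ?_
    have hc : 0 ≤ c i :=
      div_nonneg (hw i) (pow_nonneg (Finset.sum_nonneg fun j _ => Complex.normSq_nonneg _) _)
    exact ((posSemidef_vecMulVec_self_star _).kronecker (posSemidef_vecMulVec_self_star _)).smul
      (Complex.zero_le_real.mpr hc)
  · have hQY : ∀ i, Q *ᵥ Y i = Y i := fun i =>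
      mulVec_eq_self_of_mem_range hQidem (hQrange ▸ tensorPow_mem_symSpace k (y i))
    rw [Matrix.mul_sum, Matrix.sum_mul]
    refine Finset.sum_congr rfl fun i _ => ?_
    rw [Matrix.mul_smul, Matrix.smul_mul, ← mul_kronecker_mul, ← mul_kronecker_mul,
      hQH.mul_vecMulVec_star_mul (hQY i), one_mul, mul_one]
  · rw [PTr_sum]
    refine Finset.sum_congr rfl fun i _ => ?_
    rw [PTr_smul, PTr_kronecker, traceTail_vecMulVec_tensorPow hk, ← kronecker_smul,
      ofReal_div_pow_smul_vecMulVec, kronecker_smul]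

theorem stmt4 (da d k : ℕ) (hda : 0 < da) (hd : 0 < d) (hk : 0 < k)
    (Q : Matrix (Fin k → Fin d) (Fin k → Fin d) ℂ)
    (hQH : Q.IsHermitian) (hQidem : Q * Q = Q)
    (hQrange : LinearMap.range Q.mulVecLin = SymSpace d k)
    (F : Type) [Fintype F] (w : F → ℝ) (hw : ∀ i, 0 ≤ w i)
    (x : F → Fin da → ℂ) (y : F → Fin d → ℂ) :
    ∃ ρ' : Matrix (Fin da × (Fin k → Fin d)) (Fin da × (Fin k → Fin d)) ℂ,
      ρ'.PosSemidef ∧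
      ρ' = ((1 : Matrix (Fin da) (Fin da) ℂ) ⊗ₖ Q) * ρ' * ((1 : Matrix (Fin da) (Fin da) ℂ) ⊗ₖ Q) ∧
      PTr da d k ρ' = ∑ i : F, ((w i : ℝ) : ℂ) •
        (Matrix.vecMulVec (x i) (star (x i)) ⊗ₖ Matrix.vecMulVec (y i) (star (y i))) :=
  stmt4_general da d k hk Q hQH hQidem hQrange F w hw x y
end

section
/- For every PSD matrix ρ' indexed by (Fin d_a) × I_{k+1} satisfying ρ' = (I ⊗ Π_{k+1})·ρ'·(I ⊗ Π_{k+1}), there exists a PSD matrix ρ'' indexed by (Fin d_a) × I_k satisfying ρ'' = (I ⊗ Π_k)·ρ''·(I ⊗ Π_k) and PTr_k(ρ'') = PTr_{k+1}(ρ'). (That is, EXT_{k+1} ⊆ EXT_k.) -/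
open Matrix
open scoped Kronecker ComplexOrder

/-!
The witness is the partial trace `traceLast ρ'` of `ρ'` over its last symmetric factor. It is
positive semidefinite as a sum of principal submatrices. Since `ρ' = (1 ⊗ Q') ρ' (1 ⊗ Q')`, every
column slice of `ρ'` lies in the range of `Q'`, i.e. is a symmetric tensor; fixing its last entry
keeps it symmetric in the other `k`, so the slices of `traceLast ρ'` are symmetric and the
projection `1 ⊗ Q` absorbs it from the left, hence, both being Hermitian, from the right as well.
Tracing out the last factor and then the last `k - 1` of the remaining ones is `PTr_{k+1}`.
-/

lemma IsSelfAdjoint.mul_eq_self_of_mul_eq_self {A : Type*} [Mul A] [StarMul A] {r k : A}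
    (hr : IsSelfAdjoint r) (hk : IsSelfAdjoint k) (h : k * r = r) : r * k = r := by
  simpa only [star_mul, hr.star_eq, hk.star_eq] using congrArg star h

section KroneckerSlices

variable {R m n : Type*} [CommSemiring R] [Fintype m] [Fintype n] [DecidableEq m]

lemma one_kronecker_mul_apply (Q : Matrix n n R) (X : Matrix (m × n) (m × n) R)
    (a : m) (i : n) (c : m × n) :
    (((1 : Matrix m m R) ⊗ₖ Q) * X) (a, i) c = Q.mulVec (fun i' => X (a, i') c) i := by
  simp [mul_apply, Fintype.sum_prod_type, one_apply, mulVec, dotProduct]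

lemma one_kronecker_mul_slice_mem_range (Q : Matrix n n R) (X : Matrix (m × n) (m × n) R)
    (a : m) (c : m × n) :
    (fun i => (((1 : Matrix m m R) ⊗ₖ Q) * X) (a, i) c) ∈ LinearMap.range Q.mulVecLin :=
  ⟨fun i' => X (a, i') c, funext fun i => (one_kronecker_mul_apply Q X a i c).symm⟩

lemma one_kronecker_mul_eq_self {Q : Matrix n n R} (hQ : Q * Q = Q)
    {X : Matrix (m × n) (m × n) R}
    (hX : ∀ a c, (fun i => X (a, i) c) ∈ LinearMap.range Q.mulVecLin) :
    (1 : Matrix m m R) ⊗ₖ Q * X = X := by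
  ext ⟨a, i⟩ c
  obtain ⟨v, hv⟩ := hX a c
  rw [one_kronecker_mul_apply, ← hv, mulVecLin_apply, mulVec_mulVec, hQ]
  exact congrFun hv i

end KroneckerSlices

lemma snoc_comp_viaFintypeEmbedding_castSucc {α : Type*} {k : ℕ} (i : Fin k → α) (j : α)
    (π : Equiv.Perm (Fin k)) :
    (Fin.snoc i j : Fin (k + 1) → α) ∘ π.viaFintypeEmbedding Fin.castSuccEmb
      = Fin.snoc (i ∘ π) j := by
  funext s
  refine Fin.lastCases ?_ (fun t => ?_) s
  · have hlast := π.viaFintypeEmbedding_apply_notMem_range (f := Fin.castSuccEmb)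
      (b := Fin.last k) (by simp)
    simp [hlast]
  · have hcastSucc := π.viaFintypeEmbedding_apply_image Fin.castSuccEmb t
    simp_all

lemma comp_snoc_mem_symSpace {d k : ℕ} {ψ : (Fin (k + 1) → Fin d) → ℂ}
    (hψ : ψ ∈ SymSpace d (k + 1)) (j : Fin d) :
    (fun i => ψ (Fin.snoc i j)) ∈ SymSpace d k := by
  intro i π
  simpa only [snoc_comp_viaFintypeEmbedding_castSucc] using
    hψ (Fin.snoc i j) (π.viaFintypeEmbedding Fin.castSuccEmb)

section TraceLast

variable {m : Type*} {d k : ℕ}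

def traceLast {R : Type*} [AddCommMonoid R]
    (M : Matrix (m × (Fin (k + 1) → Fin d)) (m × (Fin (k + 1) → Fin d)) R) :
    Matrix (m × (Fin k → Fin d)) (m × (Fin k → Fin d)) R :=
  ∑ j, M.submatrix (fun p => (p.1, Fin.snoc p.2 j)) (fun p => (p.1, Fin.snoc p.2 j))

lemma traceLast_apply {R : Type*} [AddCommMonoid R]
    (M : Matrix (m × (Fin (k + 1) → Fin d)) (m × (Fin (k + 1) → Fin d)) R)
    (p q : m × (Fin k → Fin d)) :
    traceLast M p q = ∑ j, M (p.1, Fin.snoc p.2 j) (q.1, Fin.snoc q.2 j) := by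
  simp only [traceLast, Matrix.sum_apply, submatrix_apply]

lemma Matrix.PosSemidef.traceLast {R : Type*} [Ring R] [PartialOrder R] [StarRing R]
    [AddLeftMono R] {M : Matrix (m × (Fin (k + 1) → Fin d)) (m × (Fin (k + 1) → Fin d)) R}
    (hM : M.PosSemidef) : (traceLast M).PosSemidef :=
  posSemidef_sum _ fun _ _ => hM.submatrix _

lemma traceLast_slice_mem_symSpace
    {M : Matrix (m × (Fin (k + 1) → Fin d)) (m × (Fin (k + 1) → Fin d)) ℂ}
    (hM : ∀ a c, (fun i => M (a, i) c) ∈ SymSpace d (k + 1)) (a : m)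
    (c : m × (Fin k → Fin d)) :
    (fun i => traceLast M (a, i) c) ∈ SymSpace d k := by
  have hsum : (fun i => traceLast M (a, i) c)
      = ∑ j, fun i => M (a, Fin.snoc i j) (c.1, Fin.snoc c.2 j) := by
    ext i
    simp only [traceLast_apply, Finset.sum_apply]
  rw [hsum]
  exact Submodule.sum_mem _ fun j _ => comp_snoc_mem_symSpace (hM a _) j

end TraceLast

lemma cons0_eq_cons {d n : ℕ} (b : Fin d) (r : Fin n → Fin d) :
    (cons0 b r : Fin (n + 1) → Fin d) = Fin.cons b r := by
  funext s
  refine Fin.cases ?_ (fun t => ?_) s <;> simp [cons0]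

lemma PTr_traceLast {da d n : ℕ}
    (M : Matrix (Fin da × (Fin (n + 2) → Fin d)) (Fin da × (Fin (n + 2) → Fin d)) ℂ) :
    PTr da d (n + 1) (traceLast M) = PTr da d (n + 2) M := by
  ext p q
  -- `PTr` sums over `Fin (n + 1 - 1) → Fin d` and `Fin (n + 2 - 1) → Fin d`.
  change ∑ r : Fin n → Fin d, traceLast M (p.1, cons0 p.2 r) (q.1, cons0 q.2 r)
    = ∑ r : Fin (n + 1) → Fin d, M (p.1, cons0 p.2 r) (q.1, cons0 q.2 r)
  simp only [traceLast_apply, cons0_eq_cons, ← Fin.cons_snoc_eq_snoc_cons]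
  rw [← Fintype.sum_prod_type']
  exact Fintype.sum_equiv ((Equiv.prodComm _ _).trans (Fin.snocEquiv fun _ => Fin d)) _ _
    fun _ => rfl
theorem stmt5_general (da d k : ℕ) (hk : 0 < k)
    (Q' : Matrix (Fin (k + 1) → Fin d) (Fin (k + 1) → Fin d) ℂ)
    (hQ'range : LinearMap.range Q'.mulVecLin = SymSpace d (k + 1))
    (Q : Matrix (Fin k → Fin d) (Fin k → Fin d) ℂ)
    (hQH : Q.IsHermitian) (hQidem : Q * Q = Q)
    (hQrange : LinearMap.range Q.mulVecLin = SymSpace d k)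
    (ρ' : Matrix (Fin da × (Fin (k + 1) → Fin d)) (Fin da × (Fin (k + 1) → Fin d)) ℂ)
    (hρ' : ρ'.PosSemidef)
    (hsym : ρ' = ((1 : Matrix (Fin da) (Fin da) ℂ) ⊗ₖ Q') * ρ' *
      ((1 : Matrix (Fin da) (Fin da) ℂ) ⊗ₖ Q')) :
    ∃ ρ'' : Matrix (Fin da × (Fin k → Fin d)) (Fin da × (Fin k → Fin d)) ℂ,
      ρ''.PosSemidef ∧
      ρ'' = ((1 : Matrix (Fin da) (Fin da) ℂ) ⊗ₖ Q) * ρ'' *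
        ((1 : Matrix (Fin da) (Fin da) ℂ) ⊗ₖ Q) ∧
      PTr da d k ρ'' = PTr da d (k + 1) ρ' := by
  obtain ⟨n, rfl⟩ : ∃ n, k = n + 1 := ⟨k - 1, by omega⟩
  have hcols : ∀ a c, (fun i => ρ' (a, i) c) ∈ SymSpace d (n + 2) := by
    intro a c
    rw [← hQ'range, hsym, mul_assoc]
    exact one_kronecker_mul_slice_mem_range _ _ a c
  have hleft : (1 : Matrix (Fin da) (Fin da) ℂ) ⊗ₖ Q * traceLast ρ' = traceLast ρ' :=
    one_kronecker_mul_eq_self hQidem fun a c => hQrange ▸ traceLast_slice_mem_symSpace hcols a c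
  have hK : IsSelfAdjoint ((1 : Matrix (Fin da) (Fin da) ℂ) ⊗ₖ Q) := by
    rw [IsSelfAdjoint, star_eq_conjTranspose, conjTranspose_kronecker, conjTranspose_one, hQH.eq]
  refine ⟨traceLast ρ', hρ'.traceLast, ?_, PTr_traceLast ρ'⟩
  rw [mul_assoc, IsSelfAdjoint.mul_eq_self_of_mul_eq_self hρ'.traceLast.isHermitian hK hleft, hleft]

theorem stmt5 (da d k : ℕ) (hda : 0 < da) (hd : 0 < d) (hk : 0 < k)
    (Q' : Matrix (Fin (k + 1) → Fin d) (Fin (k + 1) → Fin d) ℂ)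
    (hQ'H : Q'.IsHermitian) (hQ'idem : Q' * Q' = Q')
    (hQ'range : LinearMap.range Q'.mulVecLin = SymSpace d (k + 1))
    (Q : Matrix (Fin k → Fin d) (Fin k → Fin d) ℂ)
    (hQH : Q.IsHermitian) (hQidem : Q * Q = Q)
    (hQrange : LinearMap.range Q.mulVecLin = SymSpace d k)
    (ρ' : Matrix (Fin da × (Fin (k + 1) → Fin d)) (Fin da × (Fin (k + 1) → Fin d)) ℂ)
    (hρ' : ρ'.PosSemidef)
    (hsym : ρ' = ((1 : Matrix (Fin da) (Fin da) ℂ) ⊗ₖ Q') * ρ' *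
      ((1 : Matrix (Fin da) (Fin da) ℂ) ⊗ₖ Q')) :
    ∃ ρ'' : Matrix (Fin da × (Fin k → Fin d)) (Fin da × (Fin k → Fin d)) ℂ,
      ρ''.PosSemidef ∧
      ρ'' = ((1 : Matrix (Fin da) (Fin da) ℂ) ⊗ₖ Q) * ρ'' *
        ((1 : Matrix (Fin da) (Fin da) ℂ) ⊗ₖ Q) ∧
      PTr da d k ρ'' = PTr da d (k + 1) ρ' :=
  stmt5_general da d k hk Q' hQ'range Q hQH hQidem hQrange ρ' hρ' hsym
end

section
/- Let ρ be a PSD matrix indexed by (Fin d_a) × (Fin d) with trace 1. Then for every matrix X indexed by (Fin d_a) × J_k that is PSD with trace 1 and every Hermitian matrix u indexed by (Fin d_a) × (Fin d), one has (1/2)·‖A(X) − ρ‖² + (1/2)·‖u‖² + Re(Tr(ρ·u)) + λmax(−A†(u)) ≥ 0 (weak duality / nonnegativity of the duality gap for the EXT least-squares primal-dual pair). -/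
open Matrix
open scoped Kronecker ComplexOrder

/-! Write `B = A(X) - ρ`. Since `A†` is the trace-adjoint of `A`,
`Re Tr(ρ u) = Re Tr(X A†(u)) - Re Tr(B u)`. Young's inequality bounds `Re Tr(B u)` by
`‖B‖²/2 + ‖u‖²/2`, and for a density matrix `X` the pairing `Re Tr(X (-A†(u)))` is at most
`λmax(-A†(u))`, because the diagonal of `X` in an eigenbasis of `-A†(u)` is a probability vector.
Adding the three estimates gives the claim. -/

section

variable {da d k : ℕ}

@[simp] lemma cons0_zero (b : Fin d) (r : Fin (k - 1) → Fin d) (hk : 0 < k) :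
    cons0 b r ⟨0, hk⟩ = b := by simp [cons0]

@[simp] lemma cons0_succ (b : Fin d) (r : Fin (k - 1) → Fin d) (s : Fin (k - 1))
    (h : (s : ℕ) + 1 < k) : cons0 b r ⟨(s : ℕ) + 1, h⟩ = r s := by
  simp [cons0]

def consEquiv (hk : 0 < k) : Fin d × (Fin (k - 1) → Fin d) ≃ (Fin k → Fin d) where
  toFun x := cons0 x.1 x.2
  invFun i := (i ⟨0, hk⟩, fun s => i ⟨(s : ℕ) + 1, by omega⟩)
  left_inv _ := by simp
  right_inv i := by
    funext ⟨s, hs⟩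
    rcases s with _ | s
    · simp
    · simp [cons0]

-- `((a, b), r) ↦ (a, b⌢r)`: the coordinates in which both `PTr` and `Emat` are written.
def headTailEquiv (da : ℕ) (hk : 0 < k) :
    (Fin da × Fin d) × (Fin (k - 1) → Fin d) ≃ Fin da × (Fin k → Fin d) :=
  (Equiv.prodAssoc _ _ _).trans ((Equiv.refl _).prodCongr (consEquiv hk))

lemma Emat_headTailEquiv (hk : 0 < k) (W : Matrix (Fin da × Fin d) (Fin da × Fin d) ℂ)
    (p q : Fin da × Fin d) (r r' : Fin (k - 1) → Fin d) :
    Emat da d k hk W (headTailEquiv da hk (p, r)) (headTailEquiv da hk (q, r')) =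
      if r = r' then W p q else 0 := by
  simp [Emat, headTailEquiv, consEquiv, funext_iff]

lemma trace_PTr_mul (hk : 0 < k)
    (M : Matrix (Fin da × (Fin k → Fin d)) (Fin da × (Fin k → Fin d)) ℂ)
    (W : Matrix (Fin da × Fin d) (Fin da × Fin d) ℂ) :
    (PTr da d k M * W).trace = (M * Emat da d k hk W).trace := by
  have hreindex : (M * Emat da d k hk W).trace = ∑ p, ∑ r, ∑ q, ∑ r',
      M (headTailEquiv da hk (p, r)) (headTailEquiv da hk (q, r')) *
        Emat da d k hk W (headTailEquiv da hk (q, r')) (headTailEquiv da hk (p, r)) := by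
    rw [trace, ← (headTailEquiv da hk).sum_comp, Fintype.sum_prod_type]
    refine Finset.sum_congr rfl fun p _ => Finset.sum_congr rfl fun r _ => ?_
    rw [diag, mul_apply, ← (headTailEquiv da hk).sum_comp, Fintype.sum_prod_type]
  rw [hreindex]
  simp only [Emat_headTailEquiv, mul_ite, mul_zero, Finset.sum_ite_eq', Finset.mem_univ, if_true]
  simp only [trace, diag, mul_apply, PTr, Finset.sum_mul]
  exact Finset.sum_congr rfl fun p _ => Finset.sum_comm

lemma trace_Amap_mul (hk : 0 < k) (X : Matrix (Fin da × Jk d k) (Fin da × Jk d k) ℂ)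
    (u : Matrix (Fin da × Fin d) (Fin da × Fin d) ℂ) :
    (Amap da d k X * u).trace = (X * Adag da d k hk u).trace := by
  rw [Amap, Adag, trace_PTr_mul hk]
  simp only [Matrix.mul_assoc]
  rw [trace_mul_comm]
  simp only [Matrix.mul_assoc]

end

lemma re_trace_mul_le_frobSq {m n : Type*} [Fintype m] [Fintype n]
    (B : Matrix m n ℂ) (u : Matrix n m ℂ) :
    (B * u).trace.re ≤ 1 / 2 * frobSq B + 1 / 2 * frobSq u := by
  have hentry (p : m) (q : n) : (B p q * u q p).re ≤ 1 / 2 * ‖B p q‖ ^ 2 + 1 / 2 * ‖u q p‖ ^ 2 :=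
    calc (B p q * u q p).re ≤ ‖B p q‖ * ‖u q p‖ := (Complex.re_le_norm _).trans (norm_mul _ _).le
      _ ≤ _ := by nlinarith [two_mul_le_add_sq ‖B p q‖ ‖u q p‖]
  calc (B * u).trace.re = ∑ p, ∑ q, (B p q * u q p).re := by
        simp only [trace, diag, mul_apply, Complex.re_sum]
    _ ≤ ∑ p, ∑ q, (1 / 2 * ‖B p q‖ ^ 2 + 1 / 2 * ‖u q p‖ ^ 2) :=
        Finset.sum_le_sum fun p _ => Finset.sum_le_sum fun q _ => hentry p q
    _ = 1 / 2 * frobSq B + 1 / 2 * frobSq u := by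
        simp only [frobSq, Finset.mul_sum, Finset.sum_add_distrib]
        exact congrArg _ Finset.sum_comm

section Eigenvalues

variable {n : Type*} [Fintype n] [DecidableEq n]

lemma Matrix.IsHermitian.trace_mul_eq_sum_eigenvalues {M : Matrix n n ℂ} (hM : M.IsHermitian)
    (X : Matrix n n ℂ) :
    (X * M).trace = ∑ i, (star (hM.eigenvectorUnitary : Matrix n n ℂ) * X *
      hM.eigenvectorUnitary) i i * hM.eigenvalues i := by
  conv_lhs => rw [hM.spectral_theorem, Unitary.conjStarAlgAut_apply]
  rw [← Matrix.mul_assoc, ← Matrix.mul_assoc, trace_mul_comm, ← Matrix.mul_assoc,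
    ← Matrix.mul_assoc]
  simp [trace, mul_diagonal]

lemma Matrix.PosSemidef.re_trace_mul_le_lamMax {X M : Matrix n n ℂ} (hX : X.PosSemidef)
    (hXtr : X.trace = 1) (hM : M.IsHermitian) : (X * M).trace.re ≤ lamMax hM := by
  set U : Matrix n n ℂ := (hM.eigenvectorUnitary : Matrix n n ℂ)
  have hY : (star U * X * U).PosSemidef := hX.conjTranspose_mul_mul_same U
  have hYtr : (star U * X * U).trace = 1 := by
    rw [trace_mul_cycle, Matrix.mem_unitaryGroup_iff.mp hM.eigenvectorUnitary.2, Matrix.one_mul,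
      hXtr]
  calc (X * M).trace.re = ∑ i, ((star U * X * U) i i).re * hM.eigenvalues i := by
        simp [hM.trace_mul_eq_sum_eigenvalues, Complex.re_sum, U]
    _ ≤ ∑ i, ((star U * X * U) i i).re * lamMax hM := by
        gcongr with i
        · exact (Complex.nonneg_iff.mp hY.diag_nonneg).1
        · exact le_ciSup (Set.finite_range _).bddAbove i
    _ = lamMax hM := by
        rw [← Finset.sum_mul, ← Complex.re_sum]
        change (star U * X * U).trace.re * _ = _
        rw [hYtr, Complex.one_re, one_mul]

end Eigenvalues

theorem stmt12_general (da d k : ℕ) (hk : 0 < k)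
    (ρ : Matrix (Fin da × Fin d) (Fin da × Fin d) ℂ)
    (X : Matrix (Fin da × Jk d k) (Fin da × Jk d k) ℂ)
    (hX : X.PosSemidef) (hXtr : X.trace = 1)
    (u : Matrix (Fin da × Fin d) (Fin da × Fin d) ℂ)
    (hnegH : (-(Adag da d k hk u)).IsHermitian) :
    0 ≤ (1 / 2) * frobSq (Amap da d k X - ρ) + (1 / 2) * frobSq u +
          ((ρ * u).trace).re + lamMax hnegH := by
  have hyoung := re_trace_mul_le_frobSq (Amap da d k X - ρ) u
  have hlam := hX.re_trace_mul_le_lamMax hXtr hnegH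
  rw [Matrix.mul_neg, trace_neg, Complex.neg_re, ← trace_Amap_mul] at hlam
  rw [Matrix.sub_mul, trace_sub, Complex.sub_re] at hyoung
  linarith

theorem stmt12 (da d k : ℕ) (hda : 0 < da) (hd : 0 < d) (hk : 0 < k)
    (ρ : Matrix (Fin da × Fin d) (Fin da × Fin d) ℂ)
    (hρ : ρ.PosSemidef) (hρtr : ρ.trace = 1)
    (X : Matrix (Fin da × Jk d k) (Fin da × Jk d k) ℂ)
    (hX : X.PosSemidef) (hXtr : X.trace = 1)
    (u : Matrix (Fin da × Fin d) (Fin da × Fin d) ℂ) (hu : u.IsHermitian)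
    (hnegH : (-(Adag da d k hk u)).IsHermitian) :
    0 ≤ (1 / 2) * frobSq (Amap da d k X - ρ) + (1 / 2) * frobSq u +
          ((ρ * u).trace).re + lamMax hnegH :=
  stmt12_general da d k hk ρ X hX hXtr u hnegH
end

section
/- For all integers d ≥ 2 and k ≥ 1, the following identity holds in ℕ: ∑_{ℓ=1}^{k} ℓ² · ⟨d−1⟩_{k−ℓ} = ∑_{ℓ₀=1}^{k} ∑_{ℓ₁=1}^{k+1−ℓ₀} ℓ₀ · ℓ₁ · ⟨d−2⟩_{k+1−ℓ₀−ℓ₁} + ∑_{ℓ₀=1}^{k−1} ∑_{ℓ₁=1}^{k−ℓ₀} ℓ₀ · ℓ₁ · ⟨d−2⟩_{k−ℓ₀−ℓ₁} (i.e., a_k = b_k + c_k after multiplying through by k²). -/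
/-!
Write `n = d - 2`. By the hockey-stick identity `⟨n + 1⟩_t = ∑_{i ≤ t} ⟨n⟩_{t - i}`, all three sums
become convolutions `∑_{m=1}^k w(m) ⟨n⟩_{k-m}` against the same sequence: the left-hand side with
`w(m) = ∑_{l=1}^m l²`, the two double sums with `w(m) = ∑_{l=1}^m l (m - l + 1)` and
`w(m) = ∑_{l=1}^m l (m - l)` (group the terms by `m = l₀ + l₁ - 1`, resp. `m = l₀ + l₁`).
The identity then holds weight by weight, since `l (m - l + 1) + l (m - l) = l (2 (m - l) + 1)`
and `∑_{l=1}^m l (2 (m - l) + 1) = ∑_{l=1}^m l²`.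
-/

open Finset

/-- `mset x t` is the number of multisets of size `t` from `x` symbols,
`⟨x⟩_t = Nat.choose (x + t - 1) t`. -/
def mset (x t : ℕ) : ℕ := Nat.choose (x + t - 1) t

lemma mset_succ_succ (n t : ℕ) : mset (n + 1) (t + 1) = mset (n + 1) t + mset n (t + 1) := by
  unfold mset
  rw [show n + 1 + (t + 1) - 1 = n + t + 1 by omega, show n + 1 + t - 1 = n + t by omega,
    show n + (t + 1) - 1 = n + t by omega, Nat.choose_succ_succ]

lemma mset_succ_eq_sum_range (n t : ℕ) : mset (n + 1) t = ∑ i ∈ range (t + 1), mset n (t - i) := by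
  induction t with
  | zero => simp [mset]
  | succ t ih =>
    rw [sum_range_succ', mset_succ_succ, ih, Nat.sub_zero]
    simp only [Nat.add_sub_add_right]

lemma sum_Icc_one_eq_sum_range {M : Type*} [AddCommMonoid M] (h : ℕ → M) (N : ℕ) :
    ∑ i ∈ Icc 1 N, h i = ∑ j ∈ range N, h (j + 1) := by
  rw [range_eq_Ico, sum_Ico_add', ← Ico_add_one_right_eq_Icc, zero_add]

lemma sum_Icc_id_mul_two (m : ℕ) : (∑ l ∈ Icc 1 m, l) * 2 = m * (m + 1) := by
  have gauss := sum_range_id_mul_two (m + 1)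
  rwa [sum_range_succ', add_zero, ← sum_Icc_one_eq_sum_range (fun l => l), Nat.add_sub_cancel,
    mul_comm (m + 1)] at gauss

lemma sum_Icc_sum_range_eq_sum_Icc_sum_Icc {M : Type*} [AddCommMonoid M] (g : ℕ → ℕ → M)
    (k : ℕ) :
    ∑ l ∈ Icc 1 k, ∑ j ∈ range (k + 1 - l), g l j =
      ∑ m ∈ Icc 1 k, ∑ l ∈ Icc 1 m, g l (m - l) := by
  rw [sum_sigma', sum_sigma']
  refine sum_nbij' (fun p => ⟨p.1 + p.2, p.1⟩) (fun q => ⟨q.2, q.1 - q.2⟩) ?_ ?_ ?_ ?_ ?_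
  all_goals
    simp only [mem_sigma, mem_Icc, mem_range, Sigma.forall, Sigma.mk.injEq, heq_eq_eq, and_true,
      Nat.add_sub_cancel_left, implies_true]
  all_goals intro _ _ _; omega

lemma sum_Icc_sum_range_mul_eq_sum_Icc_sum_mul {R : Type*} [NonUnitalNonAssocSemiring R]
    (w : ℕ → ℕ → R) (f : ℕ → R) (k : ℕ) :
    ∑ l ∈ Icc 1 k, ∑ j ∈ range (k + 1 - l), w l j * f (k - l - j) =
      ∑ m ∈ Icc 1 k, (∑ l ∈ Icc 1 m, w l (m - l)) * f (k - m) := by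
  rw [sum_Icc_sum_range_eq_sum_Icc_sum_Icc]
  refine sum_congr rfl fun m hm => ?_
  rw [sum_mul]
  refine sum_congr rfl fun l hl => ?_
  rw [show k - l - (m - l) = k - m by grind]

lemma sum_sq_mul_mset_succ (n k : ℕ) :
    ∑ l ∈ Icc 1 k, l ^ 2 * mset (n + 1) (k - l) =
      ∑ m ∈ Icc 1 k, (∑ l ∈ Icc 1 m, l ^ 2) * mset n (k - m) := by
  rw [← sum_Icc_sum_range_mul_eq_sum_Icc_sum_mul (fun l _ => l ^ 2)]
  refine sum_congr rfl fun l hl => ?_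
  rw [mset_succ_eq_sum_range, mul_sum, show k - l + 1 = k + 1 - l by grind]

lemma sum_Icc_sum_Icc_mul_mul_succ_sub (f : ℕ → ℕ) (k : ℕ) :
    ∑ l0 ∈ Icc 1 k, ∑ l1 ∈ Icc 1 (k + 1 - l0), l0 * l1 * f (k + 1 - l0 - l1) =
      ∑ m ∈ Icc 1 k, (∑ l ∈ Icc 1 m, l * (m - l + 1)) * f (k - m) := by
  rw [← sum_Icc_sum_range_mul_eq_sum_Icc_sum_mul (fun l j => l * (j + 1))]
  refine sum_congr rfl fun l _ => ?_
  rw [sum_Icc_one_eq_sum_range]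
  refine sum_congr rfl fun j _ => ?_
  rw [show k + 1 - l - (j + 1) = k - l - j by omega]

lemma sum_Icc_sum_Icc_mul_mul_sub (f : ℕ → ℕ) (k : ℕ) :
    ∑ l0 ∈ Icc 1 (k - 1), ∑ l1 ∈ Icc 1 (k - l0), l0 * l1 * f (k - l0 - l1) =
      ∑ m ∈ Icc 1 k, (∑ l ∈ Icc 1 m, l * (m - l)) * f (k - m) := by
  rw [← sum_Icc_sum_range_mul_eq_sum_Icc_sum_mul (fun l j => l * j)]
  calc ∑ l0 ∈ Icc 1 (k - 1), ∑ l1 ∈ Icc 1 (k - l0), l0 * l1 * f (k - l0 - l1)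
      = ∑ l ∈ Icc 1 (k - 1), ∑ j ∈ range (k + 1 - l), l * j * f (k - l - j) := by
        refine sum_congr rfl fun l hl => ?_
        rw [show k + 1 - l = k - l + 1 by grind, sum_range_succ', sum_Icc_one_eq_sum_range,
          mul_zero, zero_mul, add_zero]
    _ = ∑ l ∈ Icc 1 k, ∑ j ∈ range (k + 1 - l), l * j * f (k - l - j) := by
        refine sum_subset (Icc_subset_Icc_right (Nat.sub_le k 1)) fun l hl hl' => ?_
        rw [show k + 1 - l = 1 by grind]
        simp

lemma sum_Icc_mul_sub_add_one_add_sum_Icc_mul_sub (m : ℕ) :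
    ∑ l ∈ Icc 1 m, l * (m - l + 1) + ∑ l ∈ Icc 1 m, l * (m - l) = ∑ l ∈ Icc 1 m, l ^ 2 := by
  induction m with
  | zero => simp
  | succ m ih =>
    have first_sum_succ : ∑ l ∈ Icc 1 m, l * (m + 1 - l + 1) =
        ∑ l ∈ Icc 1 m, l * (m - l + 1) + ∑ l ∈ Icc 1 m, l := by
      rw [← sum_add_distrib]
      refine sum_congr rfl fun l hl => ?_
      rw [show m + 1 - l + 1 = m - l + 1 + 1 by grind]
      ring
    have second_sum_succ : ∑ l ∈ Icc 1 m, l * (m + 1 - l) =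
        ∑ l ∈ Icc 1 m, l * (m - l) + ∑ l ∈ Icc 1 m, l := by
      rw [← sum_add_distrib]
      refine sum_congr rfl fun l hl => ?_
      rw [show m + 1 - l = m - l + 1 by grind]
      ring
    have gauss := sum_Icc_id_mul_two m
    rw [sum_Icc_succ_top (by omega), sum_Icc_succ_top (by omega), sum_Icc_succ_top (by omega),
      first_sum_succ, second_sum_succ, ← ih]
    simp only [Nat.sub_self, zero_add, mul_one, mul_zero, add_zero]
    nlinarith

theorem stmt16_general (d k : ℕ) (hd : 2 ≤ d) :
    ∑ l ∈ Finset.Icc 1 k, l ^ 2 * mset (d - 1) (k - l) =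
      (∑ l0 ∈ Finset.Icc 1 k, ∑ l1 ∈ Finset.Icc 1 (k + 1 - l0),
          l0 * l1 * mset (d - 2) (k + 1 - l0 - l1)) +
      ∑ l0 ∈ Finset.Icc 1 (k - 1), ∑ l1 ∈ Finset.Icc 1 (k - l0),
          l0 * l1 * mset (d - 2) (k - l0 - l1) := by
  obtain ⟨n, rfl⟩ : ∃ n, d = n + 2 := ⟨d - 2, by omega⟩
  rw [Nat.add_sub_cancel, show n + 2 - 1 = n + 1 by omega, sum_sq_mul_mset_succ,
    sum_Icc_sum_Icc_mul_mul_succ_sub, sum_Icc_sum_Icc_mul_mul_sub, ← sum_add_distrib]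
  refine sum_congr rfl fun m _ => ?_
  rw [← add_mul, sum_Icc_mul_sub_add_one_add_sum_Icc_mul_sub]

theorem stmt16 (d k : ℕ) (hd : 2 ≤ d) (hk : 1 ≤ k) :
    ∑ l ∈ Finset.Icc 1 k, l ^ 2 * mset (d - 1) (k - l) =
      (∑ l0 ∈ Finset.Icc 1 k, ∑ l1 ∈ Finset.Icc 1 (k + 1 - l0),
          l0 * l1 * mset (d - 2) (k + 1 - l0 - l1)) +
      ∑ l0 ∈ Finset.Icc 1 (k - 1), ∑ l1 ∈ Finset.Icc 1 (k - l0),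
          l0 * l1 * mset (d - 2) (k - l0 - l1) :=
  stmt16_general d k hd
end

section
/- For all integers d ≥ 2, k ≥ 2 and n with 2 ≤ n ≤ k, the following identity holds in ℤ: ∑_{ℓ=1}^{n} ℓ² · ⟨d−1⟩_{k−ℓ} − ∑_{ℓ=1}^{n} C(ℓ+2, 3) · (⟨d−2⟩_{k−ℓ} + ⟨d−2⟩_{k−1−ℓ}) = C(n+1, 3) · ⟨d−1⟩_{k−n−1} + C(n+2, 3) · ⟨d−1⟩_{k−n−2}, where C(m, 3) = Nat.choose m 3 (so C(ℓ+2,3) = ℓ(ℓ+1)(ℓ+2)/6, C(n+1,3) = (n−1)n(n+1)/6, and C(n+2,3) = n(n+1)(n+2)/6). -/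
/-- `⟨x⟩_t` for integer `t`, equal to `0` for `t < 0`. -/
def msetZ (x : ℕ) (t : ℤ) : ℤ := if t < 0 then 0 else (mset x t.toNat : ℤ)

/-!
Write `f = ⟨d - 1⟩` and `g = ⟨d - 2⟩`. Everything rests on Pascal's rule
`f t = g t + f (t - 1)`, from which the identity follows by induction on `n`: the new
summand `C(n + 3, 3) (g (t - n - 1) + g (t - n - 2))` telescopes to
`C(n + 3, 3) (f (t - n - 1) - f (t - n - 3))`, and `C(n + 3, 3) = (n + 1)² + C(n + 1, 3)`
absorbs the new square term.
-/

theorem msetZ_succ (x : ℕ) (t : ℤ) :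
    msetZ (x + 1) t = msetZ x t + msetZ (x + 1) (t - 1) := by
  rcases lt_or_ge t 0 with ht | ht
  · simp [msetZ, ht, show t - 1 < 0 by omega]
  obtain ⟨m, rfl⟩ := Int.eq_ofNat_of_zero_le ht
  cases m with
  | zero => simp [msetZ, mset]
  | succ m =>
    have hm : ((m + 1 : ℕ) : ℤ) - 1 = m := by push_cast; ring
    simp only [msetZ, hm, Int.toNat_natCast, Nat.cast_nonneg, not_lt.mpr, if_false, mset]
    rw [show x + 1 + (m + 1) - 1 = (x + m) + 1 by omega, Nat.choose_succ_succ',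
      show x + (m + 1) - 1 = x + m by omega, show x + 1 + m - 1 = x + m by omega]
    push_cast
    ring

theorem Nat.choose_three_add_three (n : ℕ) :
    (n + 3).choose 3 = (n + 1) ^ 2 + (n + 1).choose 3 := by
  have h₁ : (n + 3).choose 3 = (n + 2).choose 2 + (n + 2).choose 3 := Nat.choose_succ_succ' _ _
  have h₂ : (n + 2).choose 3 = (n + 1).choose 2 + (n + 1).choose 3 := Nat.choose_succ_succ' _ _
  have h₃ : ((n + 2).choose 2 + (n + 1).choose 2 : ℚ) = (n + 1) ^ 2 := by
    rw [Nat.cast_choose_two, Nat.cast_choose_two]; push_cast; ring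
  norm_cast at h₃
  omega

theorem sum_sq_sub_sum_tetrahedral_of_pascal (f g : ℤ → ℤ) (hfg : ∀ t, f t = g t + f (t - 1))
    (t : ℤ) (n : ℕ) :
    (∑ l ∈ Finset.Icc 1 n, (l : ℤ) ^ 2 * f (t - l)) -
      ∑ l ∈ Finset.Icc 1 n, (Nat.choose (l + 2) 3 : ℤ) * (g (t - l) + g (t - 1 - l)) =
    (Nat.choose (n + 1) 3 : ℤ) * f (t - n - 1) + (Nat.choose (n + 2) 3 : ℤ) * f (t - n - 2) := by
  induction n with
  | zero => simp [Nat.choose_eq_zero_of_lt]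
  | succ n ih =>
    rw [Finset.sum_Icc_succ_top (by omega), Finset.sum_Icc_succ_top (by omega)]
    push_cast
    rw [show t - (n + 1 : ℤ) - 1 = t - n - 2 by ring, show t - (n + 1 : ℤ) - 2 = t - n - 3 by ring,
      show t - 1 - (n + 1 : ℤ) = t - n - 2 by ring, show t - (n + 1 : ℤ) = t - n - 1 by ring,
      show n + 1 + 1 = n + 2 by rfl, show n + 1 + 2 = n + 3 by rfl]
    have h₁ : f (t - n - 1) = g (t - n - 1) + f (t - n - 2) := by
      convert hfg (t - n - 1) using 3; ring
    have h₂ : f (t - n - 2) = g (t - n - 2) + f (t - n - 3) := by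
      convert hfg (t - n - 2) using 3; ring
    have hchoose : ((n + 3).choose 3 : ℤ) = ((n : ℤ) + 1) ^ 2 + ((n + 1).choose 3 : ℤ) := by
      exact_mod_cast Nat.choose_three_add_three n
    linear_combination ih + ((n + 3).choose 3 : ℤ) * (h₁ + h₂) - f (t - n - 1) * hchoose

theorem stmt17_general (d k n : ℕ) (hd : 2 ≤ d) :
    (∑ l ∈ Finset.Icc 1 n, (l : ℤ) ^ 2 * msetZ (d - 1) ((k : ℤ) - l)) -
      ∑ l ∈ Finset.Icc 1 n, (Nat.choose (l + 2) 3 : ℤ) *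
        (msetZ (d - 2) ((k : ℤ) - l) + msetZ (d - 2) ((k : ℤ) - 1 - l)) =
    (Nat.choose (n + 1) 3 : ℤ) * msetZ (d - 1) ((k : ℤ) - n - 1) +
      (Nat.choose (n + 2) 3 : ℤ) * msetZ (d - 1) ((k : ℤ) - n - 2) := by
  obtain ⟨x, rfl⟩ := Nat.exists_eq_add_of_le' hd
  exact sum_sq_sub_sum_tetrahedral_of_pascal (msetZ (x + 1)) (msetZ x) (msetZ_succ x) k n

theorem stmt17 (d k n : ℕ) (hd : 2 ≤ d) (hk : 2 ≤ k) (hn : 2 ≤ n) (hnk : n ≤ k) :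
    (∑ l ∈ Finset.Icc 1 n, (l : ℤ) ^ 2 * msetZ (d - 1) ((k : ℤ) - l)) -
      ∑ l ∈ Finset.Icc 1 n, (Nat.choose (l + 2) 3 : ℤ) *
        (msetZ (d - 2) ((k : ℤ) - l) + msetZ (d - 2) ((k : ℤ) - 1 - l)) =
    (Nat.choose (n + 1) 3 : ℤ) * msetZ (d - 1) ((k : ℤ) - n - 1) +
      (Nat.choose (n + 2) 3 : ℤ) * msetZ (d - 1) ((k : ℤ) - n - 2) :=
  stmt17_general d k n hd
end

section
/- For all integers d ≥ 2 and k ≥ 1, the following identity holds in ℕ: ∑_{ℓ₀=1}^{k} ∑_{ℓ₁=1}^{k+1−ℓ₀} ℓ₀ · ℓ₁ · ⟨d−2⟩_{k+1−ℓ₀−ℓ₁} + d · ∑_{ℓ₀=1}^{k−1} ∑_{ℓ₁=1}^{k−ℓ₀} ℓ₀ · ℓ₁ · ⟨d−2⟩_{k−ℓ₀−ℓ₁} = k · Nat.choose (d + k − 1) (k − 1) (equivalently, b_k + d·c_k = d_k/d, where d_k = Nat.choose (d+k−1) k, identifying the largest eigenvalue of the Gram operator M†M of the partition map). -/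
open Finset PowerSeries

theorem PowerSeries.coeff_invOneSubPow {S : Type*} [CommRing S] (a n : ℕ) :
    coeff n (invOneSubPow S a : S⟦X⟧) = a.multichoose n := by
  cases a with
  | zero => cases n <;> simp [invOneSubPow_zero, coeff_one, Nat.multichoose_zero_succ]
  | succ a =>
    rw [invOneSubPow_val_succ_eq_mk_add_choose, coeff_mk, Nat.multichoose_eq,
      Nat.add_right_comm, Nat.add_sub_cancel, Nat.choose_symm_add]

theorem Nat.add_multichoose_eq (a b n : ℕ) :
    (a + b).multichoose n = ∑ ij ∈ antidiagonal n, a.multichoose ij.1 * b.multichoose ij.2 := by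
  have h := congrArg (fun f : ℤ⟦X⟧ˣ ↦ coeff n f.val) (invOneSubPow_add ℤ a b)
  simp only [Units.val_mul, coeff_mul, coeff_invOneSubPow] at h
  exact_mod_cast h

theorem Nat.succ_mul_multichoose_succ (n j : ℕ) :
    (j + 1) * n.multichoose (j + 1) = n * (n + 1).multichoose j := by
  cases n with
  | zero => simp [Nat.multichoose_zero_succ]
  | succ n =>
    have h := Nat.choose_succ_right_eq (n + j + 1) j
    rw [show n + j + 1 - j = n + 1 by omega] at h
    rw [Nat.multichoose_eq, Nat.multichoose_eq, show n + 1 + (j + 1) - 1 = n + j + 1 by omega,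
      show n + 1 + 1 + j - 1 = n + j + 1 by omega]
    linarith

theorem sum_Icc_mul_multichoose (x n : ℕ) :
    ∑ l ∈ Icc 1 (n + 1), l * x.multichoose (n + 1 - l) = (x + 2).multichoose n := by
  rw [add_comm x, Nat.add_multichoose_eq, Nat.sum_antidiagonal_eq_sum_range_succ_mk,
    ← Ico_add_one_right_eq_Icc, sum_Ico_eq_sum_range, Nat.add_sub_cancel]
  refine sum_congr rfl fun k _ ↦ ?_
  rw [Nat.multichoose_two, add_comm 1 k, Nat.add_sub_add_right]

theorem sum_Icc_sum_Icc_mul_mset (x n : ℕ) :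
    ∑ l0 ∈ Icc 1 (n + 1), ∑ l1 ∈ Icc 1 (n + 2 - l0), l0 * l1 * mset x (n + 2 - l0 - l1) =
      (x + 4).multichoose n := by
  rw [← sum_Icc_mul_multichoose]
  refine sum_congr rfl fun l0 hl0 ↦ ?_
  rw [show n + 2 - l0 = n + 1 - l0 + 1 by grind]
  simp only [mul_assoc, ← mul_sum, mset, ← Nat.multichoose_eq, sum_Icc_mul_multichoose]

theorem stmt18 (d k : ℕ) (hd : 2 ≤ d) (hk : 1 ≤ k) :
    (∑ l0 ∈ Finset.Icc 1 k, ∑ l1 ∈ Finset.Icc 1 (k + 1 - l0),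
        l0 * l1 * mset (d - 2) (k + 1 - l0 - l1)) +
      d * ∑ l0 ∈ Finset.Icc 1 (k - 1), ∑ l1 ∈ Finset.Icc 1 (k - l0),
        l0 * l1 * mset (d - 2) (k - l0 - l1) =
    k * Nat.choose (d + k - 1) (k - 1) := by
  obtain ⟨x, rfl⟩ : ∃ x, d = x + 2 := ⟨d - 2, by omega⟩
  obtain ⟨m, rfl⟩ : ∃ m, k = m + 1 := ⟨k - 1, by omega⟩
  rw [Nat.add_sub_cancel, sum_Icc_sum_Icc_mul_mset]
  cases m with
  | zero => simp
  | succ j =>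
    rw [Nat.add_sub_cancel, sum_Icc_sum_Icc_mul_mset,
      show x + 2 + (j + 1 + 1) - 1 = x + 3 + (j + 1) - 1 by omega, ← Nat.multichoose_eq]
    calc (x + 4).multichoose (j + 1) + (x + 2) * (x + 4).multichoose j
        = (x + 3).multichoose (j + 1) + (x + 3) * (x + 4).multichoose j := by
          rw [Nat.multichoose_succ_succ]; ring
      _ = (j + 1 + 1) * (x + 3).multichoose (j + 1) := by
          rw [← Nat.succ_mul_multichoose_succ]; ring
end

section
/- Let d_a, d_b ≥ 1 and let ρ be a PSD matrix indexed by (Fin d_a) × (Fin d_b) with trace 1 such that ρ_b := Tr_a(ρ) is positive definite. Let Q be any positive definite Hermitian d_b×d_b matrix with Q·ρ_b·Q = I, and set ρ̄ := (1/d_b)·(I ⊗ Q)·ρ·(I ⊗ Q). Then Tr_a(ρ̄) = (1/d_b)·I, and ρ is separable if and only if ρ̄ is separable. -/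
open Matrix
open scoped Kronecker ComplexOrder

/-- Partial trace over the first factor. -/
noncomputable def TrA (da db : ℕ) (M : Matrix (Fin da × Fin db) (Fin da × Fin db) ℂ) :
    Matrix (Fin db) (Fin db) ℂ :=
  fun b b' => ∑ a : Fin da, M (a, b) (a, b')

/-- A matrix is separable if it is a nonnegative combination of Kronecker products of
rank-one projectors. -/
def Separable (da db : ℕ) (ρ : Matrix (Fin da × Fin db) (Fin da × Fin db) ℂ) : Prop :=
  ∃ (n : ℕ) (w : Fin n → ℝ) (x : Fin n → Fin da → ℂ) (y : Fin n → Fin db → ℂ),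
    (∀ i, 0 ≤ w i) ∧
    ρ = ∑ i : Fin n, ((w i : ℝ) : ℂ) •
      (Matrix.vecMulVec (x i) (star (x i)) ⊗ₖ Matrix.vecMulVec (y i) (star (y i)))

/-!
Conjugation `ρ ↦ (A ⊗ B) ρ (A ⊗ B)†` sends the product state `(x x†) ⊗ (y y†)` to
`((A x)(A x)†) ⊗ ((B y)(B y)†)`, so it preserves separability; for invertible `A`, `B` the
inverse conjugation does too, giving an equivalence. Since `Q` is Hermitian, `ρ̄` is such a
conjugate of `ρ` by `1 ⊗ Q` (up to a positive scalar), and the partial trace `Tr_a` turns this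
conjugation into `Tr_a(ρ) ↦ Q Tr_a(ρ) Q = 1`.
-/

lemma TrA_one_kronecker_mul_mul_one_kronecker (da db : ℕ) (Q R : Matrix (Fin db) (Fin db) ℂ)
    (M : Matrix (Fin da × Fin db) (Fin da × Fin db) ℂ) :
    TrA da db ((1 ⊗ₖ Q) * M * (1 ⊗ₖ R)) = Q * TrA da db M * R := by
  ext b b'
  simp only [TrA, mul_apply, kroneckerMap_apply, one_apply, ite_mul, one_mul, zero_mul,
    Fintype.sum_prod_type, Finset.sum_ite_irrel, Finset.sum_const_zero, Finset.sum_ite_eq,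
    Finset.mem_univ, ↓reduceIte, mul_ite, Finset.sum_mul, mul_zero, Finset.sum_ite_eq',
    Finset.mul_sum]
  rw [Finset.sum_comm]
  exact Finset.sum_congr rfl fun _ _ => Finset.sum_comm

lemma TrA_smul (da db : ℕ) (c : ℂ) (M : Matrix (Fin da × Fin db) (Fin da × Fin db) ℂ) :
    TrA da db (c • M) = c • TrA da db M := by
  ext b b'
  simp [TrA, Finset.mul_sum]

lemma mul_vecMulVec_star_mul_conjTranspose {n : Type*} [Fintype n] (A : Matrix n n ℂ)
    (y : n → ℂ) : A * vecMulVec y (star y) * Aᴴ = vecMulVec (A *ᵥ y) (star (A *ᵥ y)) := by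
  rw [Matrix.mul_vecMulVec, vecMulVec_mul, star_mulVec]

namespace Separable

variable {da db : ℕ} {ρ : Matrix (Fin da × Fin db) (Fin da × Fin db) ℂ}

lemma smul {c : ℝ} (hc : 0 ≤ c) (h : Separable da db ρ) : Separable da db ((c : ℂ) • ρ) := by
  obtain ⟨n, w, x, y, hw, rfl⟩ := h
  refine ⟨n, fun i => c * w i, x, y, fun i => mul_nonneg hc (hw i), ?_⟩
  simp only [Finset.smul_sum, smul_smul, Complex.ofReal_mul]

lemma kronecker_conj (A : Matrix (Fin da) (Fin da) ℂ) (B : Matrix (Fin db) (Fin db) ℂ)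
    (h : Separable da db ρ) : Separable da db ((A ⊗ₖ B) * ρ * (A ⊗ₖ B)ᴴ) := by
  obtain ⟨n, w, x, y, hw, rfl⟩ := h
  refine ⟨n, w, fun i => A *ᵥ x i, fun i => B *ᵥ y i, hw, ?_⟩
  simp only [Finset.mul_sum, Finset.sum_mul, mul_smul_comm, smul_mul_assoc,
    conjTranspose_kronecker, ← mul_kronecker_mul, mul_vecMulVec_star_mul_conjTranspose]

lemma smul_iff {c : ℝ} (hc : 0 < c) : Separable da db ((c : ℂ) • ρ) ↔ Separable da db ρ := by
  refine ⟨fun h => ?_, smul hc.le⟩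
  have hρ : ((c⁻¹ : ℝ) : ℂ) • (c : ℂ) • ρ = ρ := by
    rw [smul_smul, ← Complex.ofReal_mul, inv_mul_cancel₀ hc.ne', Complex.ofReal_one, one_smul]
  simpa only [hρ] using h.smul (inv_nonneg.mpr hc.le)

lemma kronecker_conj_iff {A : Matrix (Fin da) (Fin da) ℂ} {B : Matrix (Fin db) (Fin db) ℂ}
    (hA : IsUnit A) (hB : IsUnit B) :
    Separable da db ((A ⊗ₖ B) * ρ * (A ⊗ₖ B)ᴴ) ↔ Separable da db ρ := by
  refine ⟨fun h => ?_, kronecker_conj A B⟩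
  have hAB : (A⁻¹ ⊗ₖ B⁻¹) * (A ⊗ₖ B) = 1 := by
    rw [← mul_kronecker_mul, nonsing_inv_mul A ((isUnit_iff_isUnit_det A).mp hA),
      nonsing_inv_mul B ((isUnit_iff_isUnit_det B).mp hB), one_kronecker_one]
  have hρ : (A⁻¹ ⊗ₖ B⁻¹) * ((A ⊗ₖ B) * ρ * (A ⊗ₖ B)ᴴ) * (A⁻¹ ⊗ₖ B⁻¹)ᴴ = ρ := by
    calc _ = ((A⁻¹ ⊗ₖ B⁻¹) * (A ⊗ₖ B)) * ρ * ((A⁻¹ ⊗ₖ B⁻¹) * (A ⊗ₖ B))ᴴ := by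
          simp only [conjTranspose_mul, Matrix.mul_assoc]
      _ = ρ := by rw [hAB, conjTranspose_one, Matrix.one_mul, Matrix.mul_one]
  simpa only [hρ] using h.kronecker_conj A⁻¹ B⁻¹

end Separable

theorem stmt19_general (da db : ℕ) (hdb : 0 < db)
    (ρ : Matrix (Fin da × Fin db) (Fin da × Fin db) ℂ)
    (Q : Matrix (Fin db) (Fin db) ℂ) (hQ : Q.PosDef)
    (hQI : Q * TrA da db ρ * Q = 1)
    (ρbar : Matrix (Fin da × Fin db) (Fin da × Fin db) ℂ)
    (hbar : ρbar = ((db : ℂ))⁻¹ •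
      (((1 : Matrix (Fin da) (Fin da) ℂ) ⊗ₖ Q) * ρ * ((1 : Matrix (Fin da) (Fin da) ℂ) ⊗ₖ Q))) :
    TrA da db ρbar = ((db : ℂ))⁻¹ • (1 : Matrix (Fin db) (Fin db) ℂ) ∧
    (Separable da db ρ ↔ Separable da db ρbar) := by
  have hinv : ((db : ℂ))⁻¹ = (((db : ℝ)⁻¹ : ℝ) : ℂ) := by push_cast; rfl
  have hconj : ((1 : Matrix (Fin da) (Fin da) ℂ) ⊗ₖ Q) * ρ * (1 ⊗ₖ Q) =
      (1 ⊗ₖ Q) * ρ * (1 ⊗ₖ Q)ᴴ := by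
    rw [conjTranspose_kronecker, conjTranspose_one, hQ.1.eq]
  refine ⟨by rw [hbar, TrA_smul, TrA_one_kronecker_mul_mul_one_kronecker, hQI], ?_⟩
  rw [hbar, hinv, Separable.smul_iff (by positivity), hconj,
    Separable.kronecker_conj_iff isUnit_one hQ.isUnit]

theorem stmt19 (da db : ℕ) (hda : 0 < da) (hdb : 0 < db)
    (ρ : Matrix (Fin da × Fin db) (Fin da × Fin db) ℂ)
    (hρ : ρ.PosSemidef) (hρtr : ρ.trace = 1)
    (hb : (TrA da db ρ).PosDef)
    (Q : Matrix (Fin db) (Fin db) ℂ) (hQ : Q.PosDef)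
    (hQI : Q * TrA da db ρ * Q = 1)
    (ρbar : Matrix (Fin da × Fin db) (Fin da × Fin db) ℂ)
    (hbar : ρbar = ((db : ℂ))⁻¹ •
      (((1 : Matrix (Fin da) (Fin da) ℂ) ⊗ₖ Q) * ρ * ((1 : Matrix (Fin da) (Fin da) ℂ) ⊗ₖ Q))) :
    TrA da db ρbar = ((db : ℂ))⁻¹ • (1 : Matrix (Fin db) (Fin db) ℂ) ∧
    (Separable da db ρ ↔ Separable da db ρbar) :=
  stmt19_general da db hdb ρ Q hQ hQI ρbar hbar
end
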